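/- arXiv:2407.12033 — 2 statements merged into one kernel-verified Lean document; each statement's English description precedes it below -/
import Mathlib

section
/- Fix n ≥ 2, an index i with 1 ≤ i ≤ n−1, and real numbers γ, α. Let R be the n×n matrix equal to the identity except that its 2×2 submatrix at rows/columns i, i+1 is [[γ, 1−γ], [1+γ, −γ]], and let S be the n×n matrix that is zero except that its 2×2 submatrix at rows/columns i, i+1 is [[α, −α], [−α, α]]. Then the linear map Φ on ℝⁿ × ℝⁿ defined by Φ(h, v) = (Rᵀ(h + S v), R v) preserves the standard symplectic form ω((h, v), (h′, v′)) = ⟨h, v′⟩ − ⟨h′, v⟩, i.e. ω(Φ(h,v), Φ(h′,v′)) = ω((h,v), (h′,v′)) for all (h, v), (h′, v′) ∈ ℝⁿ × ℝⁿ. -/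
open Matrix

/-- The `n×n` matrix equal to the identity except that its `2×2` submatrix at
rows/columns `i, j` (with `j = i+1`) is `[[γ, 1−γ], [1+γ, −γ]]`. -/
def collisionR (n : ℕ) (i j : Fin n) (γ : ℝ) : Matrix (Fin n) (Fin n) ℝ :=
  fun a b =>
    if a = i ∧ b = i then γ
    else if a = i ∧ b = j then 1 - γ
    else if a = j ∧ b = i then 1 + γ
    else if a = j ∧ b = j then -γ
    else if a = b then 1 else 0

/-- The `n×n` matrix that is zero except that its `2×2` submatrix at
rows/columns `i, j` (with `j = i+1`) is `[[α, −α], [−α, α]]`. -/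
def collisionS (n : ℕ) (i j : Fin n) (α : ℝ) : Matrix (Fin n) (Fin n) ℝ :=
  fun a b =>
    if a = i ∧ b = i then α
    else if a = i ∧ b = j then -α
    else if a = j ∧ b = i then -α
    else if a = j ∧ b = j then α
    else 0

lemma collisionR_row_sum {n : ℕ} {i j : Fin n} (hij : i ≠ j) (γ : ℝ)
    (a : Fin n) (f : Fin n → ℝ) :
    ∑ k, collisionR n i j γ a k * f k =
      if a = i then γ * f i + (1 - γ) * f j
      else if a = j then (1 + γ) * f i + (-γ) * f j
      else f a := by
  by_cases hai : a = i
  · simp only [hai, if_pos rfl]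
    have : ∀ k ∈ Finset.univ, collisionR n i j γ i k * f k =
        (if i = k then γ * f i else 0) + (if j = k then (1 - γ) * f j else 0) := by
      intro k _
      rcases eq_or_ne k i with h1 | h1
      · subst h1; simp [collisionR, hij, Ne.symm hij]
      · rcases eq_or_ne k j with h2 | h2
        · subst h2; simp [collisionR, hij, Ne.symm hij, Ne.symm h1]
        · simp [collisionR, Ne.symm h1, Ne.symm h2, h1, h2]
    rw [Finset.sum_congr rfl this, Finset.sum_add_distrib]
    simp
  · by_cases haj : a = j
    · simp only [haj, if_neg (haj ▸ hai), if_pos rfl]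
      have : ∀ k ∈ Finset.univ, collisionR n i j γ j k * f k =
          (if i = k then (1 + γ) * f i else 0) + (if j = k then (-γ) * f j else 0) := by
        intro k _
        rcases eq_or_ne k i with h1 | h1
        · subst h1; simp [collisionR, hij, Ne.symm hij]
        · rcases eq_or_ne k j with h2 | h2
          · subst h2; simp [collisionR, hij, Ne.symm hij, Ne.symm h1]
          · simp [collisionR, Ne.symm h1, Ne.symm h2, h1, h2]
      rw [Finset.sum_congr rfl this, Finset.sum_add_distrib]
      simp
    · simp only [if_neg hai, if_neg haj]
      have : ∀ k ∈ Finset.univ, collisionR n i j γ a k * f k =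
          if a = k then f a else 0 := by
        intro k _
        rcases eq_or_ne k a with h3 | h3
        · subst h3; simp [collisionR, hai, haj]
        · rcases eq_or_ne k i with h1 | h1
          · subst h1; simp [collisionR, hai, haj, Ne.symm h3]
          · rcases eq_or_ne k j with h2 | h2
            · subst h2; simp [collisionR, hai, haj, Ne.symm h3]
            · simp [collisionR, h1, h2, Ne.symm h3]
      rw [Finset.sum_congr rfl this]
      simp

lemma collisionR_sq {n : ℕ} {i j : Fin n} (hij : i ≠ j) (γ : ℝ) :
    collisionR n i j γ * collisionR n i j γ = 1 := by
  ext a b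
  rw [Matrix.mul_apply, collisionR_row_sum hij]
  simp only [collisionR, Matrix.one_apply]
  by_cases hai : a = i <;> by_cases haj : a = j <;>
    by_cases hbi : b = i <;> by_cases hbj : b = j <;>
    simp_all [Ne.symm, eq_comm] <;> ring

lemma collisionS_symm {n : ℕ} (i j : Fin n) (α : ℝ) :
    (collisionS n i j α)ᵀ = collisionS n i j α := by
  ext a b
  simp only [Matrix.transpose_apply, collisionS]
  by_cases hai : a = i <;> by_cases haj : a = j <;>
    by_cases hbi : b = i <;> by_cases hbj : b = j <;> simp_all

/-- The collision derivative map
`Φ(h, v) = (Rᵀ(h + S v), R v)` preserves the standard symplectic form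
`ω((h,v),(h′,v′)) = ⟨h, v′⟩ − ⟨h′, v⟩` on `ℝⁿ × ℝⁿ`. -/
theorem collision_map_symplectic
    (n : ℕ) (hn : 2 ≤ n) (i j : Fin n) (hij : (j : ℕ) = (i : ℕ) + 1)
    (γ α : ℝ) (h v h' v' : Fin n → ℝ) :
    ((collisionR n i j γ)ᵀ.mulVec (h + (collisionS n i j α).mulVec v)) ⬝ᵥ
          ((collisionR n i j γ).mulVec v') -
        ((collisionR n i j γ)ᵀ.mulVec (h' + (collisionS n i j α).mulVec v')) ⬝ᵥ
          ((collisionR n i j γ).mulVec v) =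
      h ⬝ᵥ v' - h' ⬝ᵥ v := by
  have hij' : i ≠ j := by
    intro e; rw [e] at hij; omega
  have key : ∀ x y : Fin n → ℝ,
      ((collisionR n i j γ)ᵀ.mulVec x) ⬝ᵥ ((collisionR n i j γ).mulVec y) = x ⬝ᵥ y := by
    intro x y
    rw [Matrix.mulVec_transpose, ← Matrix.dotProduct_mulVec, Matrix.mulVec_mulVec,
      collisionR_sq hij', Matrix.one_mulVec]
  rw [key, key]
  have hS : ∀ x y : Fin n → ℝ,
      ((collisionS n i j α).mulVec x) ⬝ᵥ y = ((collisionS n i j α).mulVec y) ⬝ᵥ x := by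
    intro x y
    rw [dotProduct_comm, Matrix.dotProduct_mulVec, ← Matrix.mulVec_transpose,
      collisionS_symm]
  rw [add_dotProduct, add_dotProduct, hS v v']
  ring
end

section
/- Define the quadratic form Q(h, v) = Σ_{j=1}^n h_j v_j on ℝⁿ × ℝⁿ. With R, S, and Φ(h, v) = (Rᵀ(h + S v), R v) as above (R the n×n identity except the 2×2 block [[γ, 1−γ],[1+γ, −γ]] at rows/columns i, i+1; S zero except the block α[[1, −1],[−1, 1]] there), one has for every (h, v) ∈ ℝⁿ × ℝⁿ: Q(Φ(h, v)) = Q(h, v) + α (v_i − v_{i+1})². In particular, if α ≥ 0 then Q(Φ(h, v)) ≥ Q(h, v), so Φ maps the cone {Q ≥ 0} into itself. -/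
open Matrix

private lemma sum_two_aux {n : ℕ} (i j : Fin n) (hij : i ≠ j) (c d : ℝ) (f : Fin n → ℝ) :
    ∑ b, (if b = i then c else if b = j then d else 0) * f b = c * f i + d * f j := by
  have step : ∀ b, (if b = i then c else if b = j then d else 0) * f b
      = (if b = i then c * f b else 0) + (if b = j then d * f b else 0) := by
    intro b
    by_cases h1 : b = i
    · subst h1; simp [hij]
    · by_cases h2 : b = j <;> simp [h1, h2, Ne.symm hij]
  simp only [step, Finset.sum_add_distrib]
  simp

/-- For the quadratic form `Q(h, v) = Σ h_j v_j` and the collision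
derivative map `Φ(h, v) = (Rᵀ(h + S v), R v)`, one has
`Q(Φ(h, v)) = Q(h, v) + α (v_i − v_{i+1})²`; in particular if `α ≥ 0` then
`Q(Φ(h, v)) ≥ Q(h, v)`, so `Φ` maps the cone `{Q ≥ 0}` into itself. -/
theorem collision_map_Q_monotone
    (n : ℕ) (hn : 2 ≤ n) (i j : Fin n) (hij : (j : ℕ) = (i : ℕ) + 1)
    (γ α : ℝ) (h v : Fin n → ℝ) :
    (∑ k, ((collisionR n i j γ)ᵀ.mulVec (h + (collisionS n i j α).mulVec v)) k *
        ((collisionR n i j γ).mulVec v) k) =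
      (∑ k, h k * v k) + α * (v i - v j) ^ 2 ∧
    (0 ≤ α →
      (∑ k, h k * v k) ≤
        ∑ k, ((collisionR n i j γ)ᵀ.mulVec (h + (collisionS n i j α).mulVec v)) k *
          ((collisionR n i j γ).mulVec v) k) := by
  have hne : i ≠ j := by
    intro e; rw [e] at hij; omega
  set X : Fin n → ℝ := h + (collisionS n i j α).mulVec v with hX
  -- values of S·v at i and j
  have hSi : (collisionS n i j α).mulVec v i = α * v i + (-α) * v j := by
    show (∑ b, collisionS n i j α i b * v b) = _
    rw [show (fun b => collisionS n i j α i b * v b)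
        = fun b => (if b = i then α else if b = j then -α else 0) * v b from ?_,
      sum_two_aux i j hne]
    funext b
    by_cases h1 : b = i <;> by_cases h2 : b = j <;>
      simp_all [collisionS, hne, eq_comm]
  have hSj : (collisionS n i j α).mulVec v j = (-α) * v i + α * v j := by
    show (∑ b, collisionS n i j α j b * v b) = _
    rw [show (fun b => collisionS n i j α j b * v b)
        = fun b => (if b = i then -α else if b = j then α else 0) * v b from ?_,
      sum_two_aux i j hne]
    funext b
    by_cases h1 : b = i <;> by_cases h2 : b = j <;>
      simp_all [collisionS, hne, hne.symm, eq_comm]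
  have hSk : ∀ k : Fin n, k ≠ i → k ≠ j → (collisionS n i j α).mulVec v k = 0 := by
    intro k hki hkj
    show (∑ b, collisionS n i j α k b * v b) = 0
    apply Finset.sum_eq_zero
    intro b _
    simp [collisionS, hki, hkj]
  -- values of R·v
  have hRvi : (collisionR n i j γ).mulVec v i = γ * v i + (1 - γ) * v j := by
    show (∑ b, collisionR n i j γ i b * v b) = _
    rw [show (fun b => collisionR n i j γ i b * v b)
        = fun b => (if b = i then γ else if b = j then 1 - γ else 0) * v b from ?_,
      sum_two_aux i j hne]
    funext b
    by_cases h1 : b = i <;> by_cases h2 : b = j <;>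
      simp_all [collisionR, hne, eq_comm]
  have hRvj : (collisionR n i j γ).mulVec v j = (1 + γ) * v i + (-γ) * v j := by
    show (∑ b, collisionR n i j γ j b * v b) = _
    rw [show (fun b => collisionR n i j γ j b * v b)
        = fun b => (if b = i then 1 + γ else if b = j then -γ else 0) * v b from ?_,
      sum_two_aux i j hne]
    funext b
    by_cases h1 : b = i <;> by_cases h2 : b = j <;>
      simp_all [collisionR, hne, hne.symm, eq_comm]
  have hRvk : ∀ k : Fin n, k ≠ i → k ≠ j → (collisionR n i j γ).mulVec v k = v k := by
    intro k hki hkj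
    show (∑ b, collisionR n i j γ k b * v b) = v k
    rw [show (fun b => collisionR n i j γ k b * v b)
        = fun b => (if k = b then 1 else 0) * v b from ?_]
    · simp
    funext b
    by_cases h1 : b = i <;> by_cases h2 : b = j <;>
      simp_all [collisionR, hki, hkj]
  -- values of Rᵀ·X
  have hRTi : ((collisionR n i j γ)ᵀ.mulVec X) i = γ * X i + (1 + γ) * X j := by
    show (∑ b, (collisionR n i j γ)ᵀ i b * X b) = _
    rw [show (fun b => (collisionR n i j γ)ᵀ i b * X b)
        = fun b => (if b = i then γ else if b = j then 1 + γ else 0) * X b from ?_,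
      sum_two_aux i j hne]
    funext b
    by_cases h1 : b = i <;> by_cases h2 : b = j <;>
      simp_all [collisionR, Matrix.transpose_apply, hne, hne.symm, eq_comm]
  have hRTj : ((collisionR n i j γ)ᵀ.mulVec X) j = (1 - γ) * X i + (-γ) * X j := by
    show (∑ b, (collisionR n i j γ)ᵀ j b * X b) = _
    rw [show (fun b => (collisionR n i j γ)ᵀ j b * X b)
        = fun b => (if b = i then 1 - γ else if b = j then -γ else 0) * X b from ?_,
      sum_two_aux i j hne]
    funext b
    by_cases h1 : b = i <;> by_cases h2 : b = j <;>
      simp_all [collisionR, Matrix.transpose_apply, hne, hne.symm, eq_comm]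
  have hRTk : ∀ k : Fin n, k ≠ i → k ≠ j → ((collisionR n i j γ)ᵀ.mulVec X) k = X k := by
    intro k hki hkj
    show (∑ b, (collisionR n i j γ)ᵀ k b * X b) = X k
    rw [show (fun b => (collisionR n i j γ)ᵀ k b * X b)
        = fun b => (if b = k then 1 else 0) * X b from ?_]
    · simp
    funext b
    by_cases h1 : b = i <;> by_cases h2 : b = j <;>
      simp_all [collisionR, Matrix.transpose_apply, hki, hkj, eq_comm]
  have hXk : ∀ k : Fin n, k ≠ i → k ≠ j → X k = h k := by
    intro k hki hkj
    simp [hX, hSk k hki hkj]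
  -- split the sums
  set F : Fin n → ℝ :=
    fun k => ((collisionR n i j γ)ᵀ.mulVec X) k * ((collisionR n i j γ).mulVec v) k with hF
  have hjmem : j ∈ Finset.univ.erase i := Finset.mem_erase.mpr ⟨hne.symm, Finset.mem_univ j⟩
  have hsplit : ∀ G : Fin n → ℝ,
      (∑ k, G k) = G i + (G j + ∑ k ∈ (Finset.univ.erase i).erase j, G k) := by
    intro G
    rw [← Finset.add_sum_erase _ G (Finset.mem_univ i), ← Finset.add_sum_erase _ G hjmem]
  have htail : (∑ k ∈ (Finset.univ.erase i).erase j, F k)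
      = ∑ k ∈ (Finset.univ.erase i).erase j, h k * v k := by
    apply Finset.sum_congr rfl
    intro k hk
    have hkj : k ≠ j := (Finset.mem_erase.mp hk).1
    have hki : k ≠ i := (Finset.mem_erase.mp (Finset.mem_erase.mp hk).2).1
    simp [hF, hRTk k hki hkj, hRvk k hki hkj, hXk k hki hkj]
  have hXi : X i = h i + (α * v i + (-α) * v j) := by simp [hX, hSi]
  have hXj : X j = h j + ((-α) * v i + α * v j) := by simp [hX, hSj]
  have main : (∑ k, F k) = (∑ k, h k * v k) + α * (v i - v j) ^ 2 := by
    rw [hsplit F, hsplit (fun k => h k * v k), htail]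
    have : F i + F j = h i * v i + h j * v j + α * (v i - v j) ^ 2 := by
      simp only [hF, hRTi, hRTj, hRvi, hRvj, hXi, hXj]
      ring
    linarith
  refine ⟨main, fun hα => ?_⟩
  rw [main]
  nlinarith [sq_nonneg (v i - v j), mul_nonneg hα (sq_nonneg (v i - v j))]
end
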